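/- There exists a closed topological embedding of 𝒦(ℚ) into 𝒦(𝔈); that is, a map e : 𝒦(ℚ) → 𝒦(𝔈) that is a homeomorphism onto a closed subspace of 𝒦(𝔈). -/

import Mathlib

open Set Topology Filter

/-- Erdős space: the set of square-summable sequences of rationals, as a subspace of the
real Hilbert space `ℓ²`. -/
noncomputable abbrev ErdosSpace : Type :=
  {x : lp (fun _ : ℕ => ℝ) 2 // ∀ n : ℕ, ∃ q : ℚ, x n = (q : ℝ)}

/-!
`q ↦ (q, 0, 0, …)` embeds `ℚ` isometrically in `𝔈`, and its range is closed: it is the trace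
on `𝔈` of the first coordinate axis of `ℓ²`, a complete line. A closed embedding `X → Y`
induces a closed embedding `𝒦(X) → 𝒦(Y)`, `K ↦ f '' K`.
-/

namespace ErdosSpace

noncomputable def ofRat (q : ℚ) : ErdosSpace :=
  ⟨lp.single 2 0 (q : ℝ), fun n => by
    rcases eq_or_ne n 0 with rfl | hn
    · exact ⟨q, lp.single_apply_self _ _ _⟩
    · exact ⟨0, by rw [lp.single_apply_ne _ _ _ hn, Rat.cast_zero]⟩⟩

theorem isometry_ofRat : Isometry ofRat :=
  Isometry.of_dist_eq fun q q' => ((lp.isometry_single 0).dist_eq _ _).trans (Rat.dist_cast q q')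

theorem range_ofRat : range ofRat = Subtype.val ⁻¹' range (lp.single 2 0) := by
  refine Subset.antisymm (range_subset_iff.2 fun q => mem_range_self (q : ℝ)) ?_
  rintro x ⟨r, hr⟩
  obtain ⟨q, hq⟩ := x.2 0
  have hrq : r = q := by rw [← hq, ← hr, lp.single_apply_self]
  subst hrq
  exact ⟨q, Subtype.ext hr⟩

theorem isClosedEmbedding_ofRat : IsClosedEmbedding ofRat :=
  ⟨isometry_ofRat.isEmbedding, range_ofRat ▸
    (lp.isometry_single 0).isClosedEmbedding.isClosed_range.preimage continuous_subtype_val⟩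

end ErdosSpace

/-- There is a closed topological embedding of the hyperspace `𝒦(ℚ)` of nonempty compact
subsets of `ℚ` into the hyperspace `𝒦(𝔈)` of nonempty compact subsets of Erdős space
(both with the Vietoris, equivalently Hausdorff metric, topology). -/
theorem exists_closedEmbedding_compacts_rat_compacts_erdos :
    ∃ e : TopologicalSpace.NonemptyCompacts ℚ → TopologicalSpace.NonemptyCompacts ErdosSpace,
      Topology.IsClosedEmbedding e :=
  ⟨_, ErdosSpace.isClosedEmbedding_ofRat.nonemptyCompacts_map⟩
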